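/- arXiv:2108.03725 — 2 statements merged into one kernel-verified Lean document; each statement's English description precedes it below -/
import Mathlib

section
/- Let N ≥ 2, d ≥ 1, τ > 0, and let x_i, v_i : [−τ,∞) → ℝ^d (i = 1,…,N) be continuous functions, continuously differentiable on (0,∞), satisfying for t > 0 the Cucker-Smale system with self-delay ẋ_i(t) = v_i(t) and v̇_i(t) = Σ_{j=1}^N ψ_ij(t−τ)(v_j(t−τ) − v_i(t−τ)), with the normalized weights ψ_ij(t) := ψ(|x_j(t) − x_i(t)|)/Σ_{ℓ=1}^N ψ(|x_ℓ(t) − x_i(t)|) for a continuous ψ : [0,∞) → (0,1]. Assume each initial velocity v_i is constant on [−τ,0], and that there exists C ∈ (0,1) such that Ψ(d_x^0 + d_v^0/C) − C ≥ 4τ e^{Cτ}(e^{Cτ} − 1)/(Cτ). Then sup_{t≥0} d_x(t) < ∞, lim_{t→∞} d_v(t) = 0, and d_v(t) ≤ d_v^0 e^{−Ct} for all t ≥ 0. -/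
open Real Set Filter

/-- The diameter at time `t` of the configuration given by the trajectories `y`. -/
noncomputable def diamAt {N d : ℕ} (y : Fin N → ℝ → EuclideanSpace ℝ (Fin d)) (t : ℝ) : ℝ :=
  ⨆ p : Fin N × Fin N, ‖y p.1 t - y p.2 t‖

/-- The nonincreasing rearrangement `Ψ(u) = min_{s ∈ [0,u]} ψ(s)` of the influence function. -/
noncomputable def Psi (ψ : ℝ → ℝ) (u : ℝ) : ℝ := sInf (ψ '' Set.Icc 0 u)

/-! Method of steps on intervals of length `τ`. Suppose `d_v(s) ≤ d_v⁰ e^{-Cs}` up to time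
`T - τ`. Integrating, all positions stay within `u = d_x⁰ + d_v⁰ / C` up to `T - τ`, so each
normalized weight is at least `Ψ(u) / N` and any two rows of the weight matrix share a mass of at
least `Ψ(u)`: the delayed alignment forces of two agents differ by at most `(1 - Ψ(u)) d_v(t - τ)`.
Writing `v̇ᵢ + vᵢ = ∑ⱼ ψᵢⱼ vⱼ(t - τ) + (vᵢ(t) - vᵢ(t - τ))` and bounding the increment over one
delay by `K d_v⁰ e^{-Ct}` with `K = e^{Cτ} (e^{Cτ} - 1) / C`, the integrating factor `e^t` yields
`d_v(t) ≤ d_v⁰ e^{-Ct}` up to `T`, because the hypothesis on `C` gives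
`(1 - Ψ(u)) e^{Cτ} + 2K ≤ 1 - C`. -/

section Calculus

variable {E : Type*} [NormedAddCommGroup E] [NormedSpace ℝ E] {f f' : ℝ → E} {a b c C τ T : ℝ}

theorem norm_sub_le_sub_of_norm_hasDerivAt_le {G g : ℝ → ℝ} (hab : a ≤ b)
    (hf : ContinuousOn f (Icc a b)) (hG : ContinuousOn G (Icc a b))
    (hf' : ∀ t ∈ Ioo a b, HasDerivAt f (f' t) t) (hG' : ∀ t ∈ Ioo a b, HasDerivAt G (g t) t)
    (bound : ∀ t ∈ Ioo a b, ‖f' t‖ ≤ g t) : ‖f b - f a‖ ≤ G b - G a := by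
  rcases hab.eq_or_lt with rfl | hab
  · simp
  have from_interior : ∀ a' ∈ Ioo a b, ‖f b - f a'‖ ≤ G b - G a' := by
    intro a' ha'
    have sub : Icc a' b ⊆ Icc a b := Icc_subset_Icc_left ha'.1.le
    have sub' : Ico a' b ⊆ Ioo a b := fun t ht => ⟨ha'.1.trans_le ht.1, ht.2⟩
    refine image_norm_le_of_norm_deriv_right_le_deriv_boundary' (f := fun t => f t - f a')
      (B := fun t => G t - G a') ((hf.mono sub).sub continuousOn_const)
      (fun t ht => ((hf' t (sub' ht)).sub_const (f a')).hasDerivWithinAt) (by simp)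
      ((hG.mono sub).sub continuousOn_const)
      (fun t ht => ((hG' t (sub' ht)).sub_const (G a')).hasDerivWithinAt)
      (fun t ht => bound t (sub' ht)) (right_mem_Icc.2 ha'.2.le)
  have ha : a ∈ Icc a b := left_mem_Icc.2 hab.le
  refine ContinuousWithinAt.closure_le (closure_Ioo hab.ne ▸ ha) ?_ ?_ from_interior
  · exact (continuousWithinAt_const.sub (hf a ha)).norm.mono Ioo_subset_Icc_self
  · exact (continuousWithinAt_const.sub (hG a ha)).mono Ioo_subset_Icc_self

theorem norm_sub_le_of_norm_hasDerivAt_le_exp (hC : C ≠ 0) (hab : a ≤ b)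
    (hf : ContinuousOn f (Icc a b)) (hf' : ∀ t ∈ Ioo a b, HasDerivAt f (f' t) t)
    (bound : ∀ t ∈ Ioo a b, ‖f' t‖ ≤ c * exp (-C * t)) :
    ‖f b - f a‖ ≤ c / C * (exp (-C * a) - exp (-C * b)) := by
  have hG : ∀ t, HasDerivAt (fun s => -(c / C) * exp (-C * s)) (c * exp (-C * t)) t := by
    intro t
    have h := ((hasDerivAt_id t).const_mul (-C)).exp.const_mul (-(c / C))
    refine h.congr_deriv ?_
    simp only [id, mul_one]
    field_simp
  have := norm_sub_le_sub_of_norm_hasDerivAt_le hab hf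
    (fun t _ => (hG t).continuousAt.continuousWithinAt) hf' (fun t _ => hG t) bound
  linarith

theorem norm_le_of_norm_deriv_add_le_exp (hf : ContinuousOn f (Icc 0 T))
    (hf' : ∀ t ∈ Ioo 0 T, HasDerivAt f (f' t) t)
    (bound : ∀ t ∈ Ioo 0 T, ‖f' t + f t‖ ≤ (1 - C) * c * exp (-C * t)) (h0 : ‖f 0‖ ≤ c)
    {t : ℝ} (ht : t ∈ Icc 0 T) : ‖f t‖ ≤ c * exp (-C * t) := by
  have hG : ∀ s, HasDerivAt (fun s => c * exp ((1 - C) * s)) ((1 - C) * c * exp ((1 - C) * s)) s :=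
    fun s => (((hasDerivAt_id s).const_mul (1 - C)).exp.const_mul c).congr_deriv (by simp; ring)
  have hsub : Icc 0 t ⊆ Icc 0 T := Icc_subset_Icc_right ht.2
  have hsub' : Ioo 0 t ⊆ Ioo 0 T := Ioo_subset_Ioo_right ht.2
  -- Integrating factor: `exp s • f s` has derivative `exp s • (f' s + f s)`.
  have key := norm_sub_le_sub_of_norm_hasDerivAt_le (f := fun s => exp s • f s) ht.1
    (continuous_exp.continuousOn.smul (hf.mono hsub))
    (fun s _ => (hG s).continuousAt.continuousWithinAt)
    (fun s hs => ((hasDerivAt_exp s).smul (hf' s (hsub' hs))).congr_deriv (smul_add _ _ _).symm)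
    (fun s _ => hG s) (fun s hs => by
      rw [norm_smul, Real.norm_of_nonneg (exp_pos s).le, show (1 - C) * s = s + -C * s by ring,
        exp_add]
      have := mul_le_mul_of_nonneg_left (bound s (hsub' hs)) (exp_pos s).le
      linarith)
  have hnorm : exp t * ‖f t‖ ≤ exp t * (c * exp (-C * t)) := by
    calc exp t * ‖f t‖ = ‖exp t • f t‖ := by rw [norm_smul, Real.norm_of_nonneg (exp_pos t).le]
      _ ≤ ‖f 0‖ + ‖exp t • f t - exp 0 • f 0‖ := by
          rw [exp_zero, one_smul]; exact norm_le_norm_add_norm_sub' _ _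
      _ ≤ c + (c * exp ((1 - C) * t) - c * exp ((1 - C) * 0)) := add_le_add h0 key
      _ = exp t * (c * exp (-C * t)) := by
          rw [mul_zero, exp_zero, show (1 - C) * t = t + -C * t by ring, exp_add]; ring
  exact le_of_mul_le_mul_left hnorm (exp_pos t)

/-- `∫_{σ-τ}^{σ} e^{-C(s-τ)} ds = delayGain C τ * e^{-Cσ}`. -/
noncomputable def delayGain (C τ : ℝ) : ℝ := exp (C * τ) * (exp (C * τ) - 1) / C

theorem norm_sub_delay_le (hτ : 0 ≤ τ) (hC : 0 < C) (hc : 0 ≤ c)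
    (hf : ContinuousOn f (Ici (-τ))) (hconst : ∀ t ∈ Icc (-τ) 0, f t = f 0)
    (hf' : ∀ t ∈ Ioo 0 T, HasDerivAt f (f' t) t)
    (bound : ∀ t ∈ Ioo 0 T, ‖f' t‖ ≤ c * exp (C * τ) * exp (-C * t)) {σ : ℝ} (hσ : σ ∈ Icc 0 T) :
    ‖f σ - f (σ - τ)‖ ≤ c * delayGain C τ * exp (-C * σ) := by
  set m := max (σ - τ) 0
  have hm : f (σ - τ) = f m := by
    rcases le_total (σ - τ) 0 with h | h
    · rw [hconst _ ⟨by linarith [hσ.1], h⟩, show m = 0 from max_eq_right h]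
    · rw [show m = σ - τ from max_eq_left h]
  have hmσ : m ≤ σ := max_le (by linarith) hσ.1
  have hsub : Ioo m σ ⊆ Ioo 0 T := Ioo_subset_Ioo (le_max_right _ _) hσ.2
  have hinc := norm_sub_le_of_norm_hasDerivAt_le_exp hC.ne' hmσ
    (hf.mono fun t ht => (by linarith [ht.1, le_max_right (σ - τ) 0] : -τ ≤ t))
    (fun t ht => hf' t (hsub ht)) (fun t ht => bound t (hsub ht))
  have hexp : exp (-C * m) ≤ exp (-C * (σ - τ)) :=
    exp_le_exp.2 (by nlinarith [le_max_left (σ - τ) 0])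
  rw [hm]
  calc ‖f σ - f m‖ ≤ c * exp (C * τ) / C * (exp (-C * (σ - τ)) - exp (-C * σ)) :=
        hinc.trans (by gcongr)
    _ = c * delayGain C τ * exp (-C * σ) := by
        rw [delayGain, show -C * (σ - τ) = C * τ + -C * σ by ring, exp_add]
        field_simp

end Calculus

section Coupling

variable {ι E : Type*} [Fintype ι] [NormedAddCommGroup E] [NormedSpace ℝ E]

theorem norm_sum_smul_sub_sum_smul_le {a b : ι → ℝ} (hab : ∑ j, a j = ∑ j, b j) {z : ι → E}
    {D : ℝ} (hz : ∀ j l, ‖z j - z l‖ ≤ D) :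
    ‖∑ j, a j • z j - ∑ j, b j • z j‖ ≤ (∑ j, a j - ∑ j, min (a j) (b j)) * D := by
  set A := fun j => a j - min (a j) (b j)
  set B := fun j => b j - min (a j) (b j)
  set ρ := ∑ j, A j
  have hA : ∀ j, 0 ≤ A j := fun j => sub_nonneg.2 (min_le_left _ _)
  have hB : ∀ j, 0 ≤ B j := fun j => sub_nonneg.2 (min_le_right _ _)
  have hρ : ∑ j, a j - ∑ j, min (a j) (b j) = ρ := Finset.sum_sub_distrib ..|>.symm
  have hρB : ∑ l, B l = ρ := by simp only [B, ρ, A, Finset.sum_sub_distrib, hab]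
  have hdiff : ∑ j, a j • z j - ∑ j, b j • z j = ∑ j, A j • z j - ∑ l, B l • z l := by
    simp only [A, B, sub_smul, Finset.sum_sub_distrib]
    abel
  -- Coupling the excess masses `A` and `B`: each unit moved from `l` to `j` costs at most `D`.
  have hcouple : ρ • (∑ j, A j • z j - ∑ l, B l • z l) = ∑ j, ∑ l, (A j * B l) • (z j - z l) := by
    have hj : ∑ j, ∑ l, (A j * B l) • z j = ρ • ∑ j, A j • z j := by
      simp only [mul_comm (A _), mul_smul, ← Finset.sum_smul, hρB, Finset.smul_sum]
    have hl : ∑ j, ∑ l, (A j * B l) • z l = ρ • ∑ l, B l • z l := by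
      simp only [mul_smul, ← Finset.smul_sum, ← Finset.sum_smul, ρ]
    simp only [smul_sub, Finset.sum_sub_distrib, hj, hl]
  have hnorm : ρ * ‖∑ j, A j • z j - ∑ l, B l • z l‖ ≤ ρ * (ρ * D) := by
    calc ρ * ‖∑ j, A j • z j - ∑ l, B l • z l‖
        = ‖∑ j, ∑ l, (A j * B l) • (z j - z l)‖ := by
          rw [← hcouple, norm_smul, Real.norm_of_nonneg (Finset.sum_nonneg fun j _ => hA j)]
      _ ≤ ∑ j, ∑ l, A j * B l * D := by
          refine (norm_sum_le _ _).trans (Finset.sum_le_sum fun j _ => ?_)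
          refine (norm_sum_le _ _).trans (Finset.sum_le_sum fun l _ => ?_)
          rw [norm_smul, Real.norm_of_nonneg (mul_nonneg (hA j) (hB l))]
          exact mul_le_mul_of_nonneg_left (hz j l) (mul_nonneg (hA j) (hB l))
      _ = ρ * (ρ * D) := by
          simp only [mul_assoc, ← Finset.mul_sum, ← Finset.sum_mul, hρB, ρ]
  rw [hρ, hdiff]
  rcases (Finset.sum_nonneg fun j _ => hA j : 0 ≤ ρ).eq_or_lt with hρ0 | hρ0
  · have hA0 : ∀ j, A j = 0 := fun j =>
      (Finset.sum_eq_zero_iff_of_nonneg fun j _ => hA j).1 hρ0.symm j (Finset.mem_univ j)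
    have hB0 : ∀ l, B l = 0 := fun l =>
      (Finset.sum_eq_zero_iff_of_nonneg fun l _ => hB l).1 (hρB.trans hρ0.symm) l
        (Finset.mem_univ l)
    simp [hA0, hB0, ρ]
  · exact le_of_mul_le_mul_left hnorm hρ0

end Coupling

section Weights

variable {ι E : Type*} [Fintype ι] [NormedAddCommGroup E]

noncomputable def csWeight (ψ : ℝ → ℝ) (y : ι → E) (i j : ι) : ℝ :=
  ψ ‖y j - y i‖ / ∑ l, ψ ‖y l - y i‖

variable {ψ : ℝ → ℝ} {y : ι → E}

theorem Psi_le {u r : ℝ} (hψ : ∀ s ∈ Icc 0 u, 0 ≤ ψ s) (hr : r ∈ Icc 0 u) : Psi ψ u ≤ ψ r :=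
  csInf_le ⟨0, by rintro _ ⟨s, hs, rfl⟩; exact hψ s hs⟩ (mem_image_of_mem ψ hr)

theorem sum_psi_norm_sub_pos (hψ : ∀ s, 0 ≤ s → 0 < ψ s) (i : ι) : 0 < ∑ l, ψ ‖y l - y i‖ :=
  Finset.sum_pos (fun _ _ => hψ _ (norm_nonneg _)) ⟨i, Finset.mem_univ i⟩

theorem csWeight_nonneg (hψ : ∀ s, 0 ≤ s → 0 < ψ s) (i j : ι) : 0 ≤ csWeight ψ y i j :=
  div_nonneg (hψ _ (norm_nonneg _)).le (sum_psi_norm_sub_pos hψ i).le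

theorem sum_csWeight (hψ : ∀ s, 0 ≤ s → 0 < ψ s) (i : ι) : ∑ j, csWeight ψ y i j = 1 := by
  simp only [csWeight]
  rw [← Finset.sum_div, div_self (sum_psi_norm_sub_pos hψ i).ne']

theorem Psi_div_card_le_csWeight (hψ : ∀ s, 0 ≤ s → ψ s ∈ Ioc 0 1) {u : ℝ} {i j : ι}
    (hy : ‖y j - y i‖ ≤ u) : Psi ψ u / Fintype.card ι ≤ csWeight ψ y i j := by
  have hsum : ∑ l, ψ ‖y l - y i‖ ≤ Fintype.card ι := by
    simpa using Finset.sum_le_sum fun l (_ : l ∈ Finset.univ) => (hψ _ (norm_nonneg (y l - y i))).2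
  exact div_le_div₀ (hψ _ (norm_nonneg _)).1.le
    (Psi_le (fun s hs => (hψ s hs.1).1.le) ⟨norm_nonneg _, hy⟩)
    (sum_psi_norm_sub_pos (fun s hs => (hψ s hs).1) i) hsum

variable [NormedSpace ℝ E]

noncomputable def csForce (ψ : ℝ → ℝ) (y z : ι → E) (i : ι) : E :=
  ∑ j, csWeight ψ y i j • (z j - z i)

theorem csForce_eq (hψ : ∀ s, 0 ≤ s → 0 < ψ s) (z : ι → E) (i : ι) :
    csForce ψ y z i = ∑ j, csWeight ψ y i j • z j - z i := by
  simp only [csForce, smul_sub, Finset.sum_sub_distrib, ← Finset.sum_smul, sum_csWeight hψ,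
    one_smul]

theorem norm_csForce_le (hψ : ∀ s, 0 ≤ s → 0 < ψ s) {z : ι → E} {D : ℝ} {i : ι}
    (hz : ∀ j, ‖z j - z i‖ ≤ D) : ‖csForce ψ y z i‖ ≤ D := by
  calc ‖csForce ψ y z i‖ ≤ ∑ j, csWeight ψ y i j * D := by
        refine (norm_sum_le _ _).trans (Finset.sum_le_sum fun j _ => ?_)
        rw [norm_smul, Real.norm_of_nonneg (csWeight_nonneg hψ i j)]
        exact mul_le_mul_of_nonneg_left (hz j) (csWeight_nonneg hψ i j)
    _ = D := by rw [← Finset.sum_mul, sum_csWeight hψ, one_mul]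

/-- Each weight is at least `Ψ(u) / card ι`, so the weight vectors of two agents overlap in a mass
of at least `Ψ(u)`, and only the remaining mass `1 - Ψ(u)` can move the weighted averages apart. -/
theorem norm_sum_csWeight_smul_sub_sum_csWeight_smul_le (hψ : ∀ s, 0 ≤ s → ψ s ∈ Ioc 0 1)
    {u D : ℝ} {z : ι → E} (hy : ∀ j l, ‖y j - y l‖ ≤ u) (hz : ∀ j l, ‖z j - z l‖ ≤ D) (i k : ι) :
    ‖∑ j, csWeight ψ y i j • z j - ∑ j, csWeight ψ y k j • z j‖ ≤ (1 - Psi ψ u) * D := by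
  have hψ' : ∀ s, 0 ≤ s → 0 < ψ s := fun s hs => (hψ s hs).1
  have hshared : Psi ψ u ≤ ∑ j, min (csWeight ψ y i j) (csWeight ψ y k j) := by
    have : Nonempty ι := ⟨i⟩
    calc Psi ψ u = ∑ _j : ι, Psi ψ u / Fintype.card ι := by
          rw [Finset.sum_const, Finset.card_univ, nsmul_eq_mul,
            mul_div_cancel₀ _ (Nat.cast_ne_zero.2 Fintype.card_ne_zero)]
      _ ≤ _ := Finset.sum_le_sum fun j _ =>
          le_min (Psi_div_card_le_csWeight hψ (hy j i)) (Psi_div_card_le_csWeight hψ (hy j k))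
  refine (norm_sum_smul_sub_sum_smul_le ((sum_csWeight hψ' i).trans (sum_csWeight hψ' k).symm)
    hz).trans ?_
  rw [sum_csWeight hψ' i]
  exact mul_le_mul_of_nonneg_right (by linarith) ((norm_nonneg _).trans (hz i i))

theorem norm_csForce_sub_csForce_add_sub_le (hψ : ∀ s, 0 ≤ s → ψ s ∈ Ioc 0 1) {u D δ : ℝ}
    {z a : ι → E} (hy : ∀ j l, ‖y j - y l‖ ≤ u) (hz : ∀ j l, ‖z j - z l‖ ≤ D)
    (ha : ∀ j, ‖a j - z j‖ ≤ δ) (i k : ι) :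
    ‖csForce ψ y z i - csForce ψ y z k + (a i - a k)‖ ≤ (1 - Psi ψ u) * D + 2 * δ := by
  have hψ' : ∀ s, 0 ≤ s → 0 < ψ s := fun s hs => (hψ s hs).1
  have hsplit : csForce ψ y z i - csForce ψ y z k + (a i - a k) =
      (∑ j, csWeight ψ y i j • z j - ∑ j, csWeight ψ y k j • z j) +
        ((a i - z i) - (a k - z k)) := by
    rw [csForce_eq hψ', csForce_eq hψ']
    abel
  rw [hsplit]
  refine (norm_add_le _ _).trans (add_le_add
    (norm_sum_csWeight_smul_sub_sum_csWeight_smul_le hψ hy hz i k) ?_)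
  linarith [norm_sub_le (a i - z i) (a k - z k), ha i, ha k]

end Weights

theorem one_sub_mul_exp_add_two_mul_delayGain_le {C τ P : ℝ} (hC : C ∈ Ioo 0 1) (hτ : 0 ≤ τ)
    (h : C + 4 * delayGain C τ ≤ P) : (1 - P) * exp (C * τ) + 2 * delayGain C τ ≤ 1 - C := by
  obtain ⟨hC0, hC1⟩ := hC
  have he : 1 ≤ exp (C * τ) := one_le_exp (mul_nonneg hC0.le hτ)
  have hK : delayGain C τ * C = exp (C * τ) * (exp (C * τ) - 1) := by
    rw [delayGain]; field_simp
  have hK0 : 0 ≤ delayGain C τ := div_nonneg (by nlinarith) hC0.le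
  nlinarith

section Diameter

variable {N d : ℕ} (y : Fin N → ℝ → EuclideanSpace ℝ (Fin d))

theorem norm_sub_le_diamAt (t : ℝ) (i k : Fin N) : ‖y i t - y k t‖ ≤ diamAt y t :=
  le_ciSup (f := fun p : Fin N × Fin N => ‖y p.1 t - y p.2 t‖) (finite_range _).bddAbove (i, k)

theorem diamAt_nonneg (t : ℝ) : 0 ≤ diamAt y t :=
  Real.iSup_nonneg fun _ => norm_nonneg _

variable {y}

theorem diamAt_le {t c : ℝ} (h : ∀ i k, ‖y i t - y k t‖ ≤ c) (hc : 0 ≤ c) : diamAt y t ≤ c :=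
  Real.iSup_le (fun p => h p.1 p.2) hc

theorem diamAt_eq_of_forall_eq {t s : ℝ} (h : ∀ i, y i t = y i s) : diamAt y t = diamAt y s := by
  simp only [diamAt, h]

theorem bddAbove_diamAt_image {s : Set ℝ} (hs : IsCompact s) (hy : ∀ i, ContinuousOn (y i) s) :
    BddAbove (diamAt y '' s) := by
  choose M hM using fun p : Fin N × Fin N => hs.exists_bound_of_continuousOn ((hy p.1).sub (hy p.2))
  refine ⟨⨆ p, M p, ?_⟩
  rintro _ ⟨t, ht, rfl⟩
  exact ciSup_mono (finite_range M).bddAbove fun p => hM p t ht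

end Diameter

structure IsCSDelaySolution {N d : ℕ} (τ : ℝ) (ψ : ℝ → ℝ)
    (x v : Fin N → ℝ → EuclideanSpace ℝ (Fin d)) : Prop where
  continuousOn_x : ∀ i, ContinuousOn (x i) (Ici (-τ))
  continuousOn_v : ∀ i, ContinuousOn (v i) (Ici (-τ))
  hasDerivAt_x : ∀ i, ∀ t, 0 < t → HasDerivAt (x i) (v i t) t
  hasDerivAt_v : ∀ i, ∀ t, 0 < t →
    HasDerivAt (v i) (csForce ψ (fun j => x j (t - τ)) (fun j => v j (t - τ)) i) t

namespace IsCSDelaySolution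

variable {N d : ℕ} {τ C : ℝ} {ψ : ℝ → ℝ} {x v : Fin N → ℝ → EuclideanSpace ℝ (Fin d)}

theorem norm_sub_x_le (hs : IsCSDelaySolution τ ψ x v) (hτ : 0 ≤ τ) (hC : 0 < C) {c S : ℝ}
    (hv : ∀ t ∈ Icc 0 S, diamAt v t ≤ c * exp (-C * t)) {s : ℝ} (hsS : s ∈ Icc 0 S)
    (j l : Fin N) : ‖x j s - x l s‖ ≤ ‖x j 0 - x l 0‖ + c / C := by
  have hc : 0 ≤ c := by
    simpa using (diamAt_nonneg v 0).trans (hv 0 ⟨le_rfl, hsS.1.trans hsS.2⟩)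
  have hcont : ∀ i, ContinuousOn (x i) (Icc 0 s) := fun i =>
    (hs.continuousOn_x i).mono fun t ht => (by linarith [ht.1] : -τ ≤ t)
  have hinc := norm_sub_le_of_norm_hasDerivAt_le_exp (f := fun t => x j t - x l t) hC.ne' hsS.1
    ((hcont j).sub (hcont l))
    (fun t ht => (hs.hasDerivAt_x j t ht.1).sub (hs.hasDerivAt_x l t ht.1))
    (fun t ht => (norm_sub_le_diamAt v t j l).trans (hv t ⟨ht.1.le, ht.2.le.trans hsS.2⟩))
  rw [mul_zero, exp_zero] at hinc
  calc ‖x j s - x l s‖ ≤ ‖x j 0 - x l 0‖ + ‖(x j s - x l s) - (x j 0 - x l 0)‖ :=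
        norm_le_norm_add_norm_sub' _ _
    _ ≤ ‖x j 0 - x l 0‖ + c / C := by
        gcongr
        exact hinc.trans (mul_le_of_le_one_right (by positivity) (by linarith [exp_pos (-C * s)]))

theorem diamAt_le_of_le_delayed (hs : IsCSDelaySolution τ ψ x v) (hτ : 0 ≤ τ) (hC : 0 < C)
    (hψ : ∀ s, 0 ≤ s → ψ s ∈ Ioc 0 1) (hconst : ∀ i, ∀ t ∈ Icc (-τ) 0, v i t = v i 0)
    {dx0 : ℝ} (hdx : ∀ s ∈ Icc (-τ) 0, diamAt x s ≤ dx0)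
    (hgain : (1 - Psi ψ (dx0 + diamAt v 0 / C)) * exp (C * τ) + 2 * delayGain C τ ≤ 1 - C)
    {T : ℝ} (hT : τ ≤ T) (hprev : ∀ t ∈ Icc (-τ) (T - τ), diamAt v t ≤ diamAt v 0 * exp (-C * t))
    {t : ℝ} (ht : t ∈ Icc (-τ) T) : diamAt v t ≤ diamAt v 0 * exp (-C * t) := by
  rcases le_or_gt t (T - τ) with h | h
  · exact hprev t ⟨ht.1, h⟩
  set c := diamAt v 0
  have hc : 0 ≤ c := diamAt_nonneg v 0
  have hpos : ∀ s ∈ Icc (-τ) (T - τ), ∀ j l, ‖x j s - x l s‖ ≤ dx0 + c / C := by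
    intro s hs' j l
    rcases le_total s 0 with hs0 | hs0
    · linarith [(norm_sub_le_diamAt x s j l).trans (hdx s ⟨hs'.1, hs0⟩), div_nonneg hc hC.le]
    · have hx0 := (norm_sub_le_diamAt x 0 j l).trans (hdx 0 ⟨by linarith, le_rfl⟩)
      linarith [hs.norm_sub_x_le hτ hC (fun t ht => hprev t ⟨by linarith [ht.1], ht.2⟩)
        ⟨hs0, hs'.2⟩ j l]
  have hdelay : ∀ σ ∈ Ioo 0 T, diamAt v (σ - τ) ≤ c * exp (C * τ) * exp (-C * σ) := by
    intro σ hσ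
    refine (hprev _ ⟨by linarith [hσ.1], by linarith [hσ.2]⟩).trans_eq ?_
    rw [mul_assoc, ← exp_add]; ring_nf
  have hincr : ∀ i, ∀ σ ∈ Icc 0 T, ‖v i σ - v i (σ - τ)‖ ≤ c * delayGain C τ * exp (-C * σ) :=
    fun i σ hσ => norm_sub_delay_le hτ hC hc (hs.continuousOn_v i) (hconst i)
      (fun t ht => hs.hasDerivAt_v i t ht.1)
      (fun t ht => norm_csForce_le (fun s hs => (hψ s hs).1) fun j =>
        (norm_sub_le_diamAt v _ j i).trans (hdelay t ht)) hσ
  have hcont : ∀ i, ContinuousOn (v i) (Icc 0 T) := fun i =>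
    (hs.continuousOn_v i).mono fun t ht => (by linarith [ht.1] : -τ ≤ t)
  refine diamAt_le (fun i k => ?_) (by positivity)
  refine norm_le_of_norm_deriv_add_le_exp ((hcont i).sub (hcont k))
    (fun σ hσ => (hs.hasDerivAt_v i σ hσ.1).sub (hs.hasDerivAt_v k σ hσ.1)) (fun σ hσ => ?_)
    (norm_sub_le_diamAt v 0 i k) ⟨by linarith, ht.2⟩
  calc _ ≤ (1 - Psi ψ (dx0 + c / C)) * (c * exp (C * τ) * exp (-C * σ)) +
        2 * (c * delayGain C τ * exp (-C * σ)) :=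
        norm_csForce_sub_csForce_add_sub_le hψ (hpos _ ⟨by linarith [hσ.1], by linarith [hσ.2]⟩)
          (fun j l => (norm_sub_le_diamAt v _ j l).trans (hdelay σ hσ))
          (fun j => hincr j σ ⟨hσ.1.le, hσ.2.le⟩) i k
    _ = c * exp (-C * σ) * ((1 - Psi ψ (dx0 + c / C)) * exp (C * τ) + 2 * delayGain C τ) := by
        ring
    _ ≤ (1 - C) * c * exp (-C * σ) := by
        nlinarith [mul_le_mul_of_nonneg_left hgain (by positivity : 0 ≤ c * exp (-C * σ))]

theorem diamAt_le_exp (hs : IsCSDelaySolution τ ψ x v) (hτ : 0 < τ) (hC : 0 < C)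
    (hψ : ∀ s, 0 ≤ s → ψ s ∈ Ioc 0 1) (hconst : ∀ i, ∀ t ∈ Icc (-τ) 0, v i t = v i 0)
    {dx0 : ℝ} (hdx : ∀ s ∈ Icc (-τ) 0, diamAt x s ≤ dx0)
    (hgain : (1 - Psi ψ (dx0 + diamAt v 0 / C)) * exp (C * τ) + 2 * delayGain C τ ≤ 1 - C)
    {t : ℝ} (ht : -τ ≤ t) : diamAt v t ≤ diamAt v 0 * exp (-C * t) := by
  have hsteps : ∀ k : ℕ, ∀ t ∈ Icc (-τ) (k * τ), diamAt v t ≤ diamAt v 0 * exp (-C * t) := by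
    intro k
    induction k with
    | zero =>
      intro t ht
      rw [Nat.cast_zero, zero_mul] at ht
      rw [diamAt_eq_of_forall_eq fun i => hconst i t ht]
      exact le_mul_of_one_le_right (diamAt_nonneg v 0) (one_le_exp (by nlinarith [ht.2]))
    | succ k ih =>
      intro t ht
      refine hs.diamAt_le_of_le_delayed hτ.le hC hψ hconst hdx hgain (T := (k + 1) * τ)
        (by nlinarith [k.cast_nonneg (α := ℝ)]) (fun s hs => ih s ?_) (by exact_mod_cast ht)
      simpa [add_mul] using hs
  exact hsteps ⌈t / τ⌉₊ t ⟨ht, (div_le_iff₀ hτ).1 (Nat.le_ceil _)⟩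

end IsCSDelaySolution

theorem flocking_CS_selfdelay_normalized_weights_constant_initial_velocity_general
    {N d : ℕ} {τ : ℝ} (hτ : 0 < τ)
    (x v : Fin N → ℝ → EuclideanSpace ℝ (Fin d))
    (hxc : ∀ i, ContinuousOn (x i) (Ici (-τ)))
    (hvc : ∀ i, ContinuousOn (v i) (Ici (-τ)))
    (ψ : ℝ → ℝ) (hψ : ∀ s, 0 ≤ s → ψ s ∈ Ioc (0 : ℝ) 1)
    (hx' : ∀ i, ∀ t, 0 < t → HasDerivAt (x i) (v i t) t)
    (hv' : ∀ i, ∀ t, 0 < t → HasDerivAt (v i)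
      (∑ j, (ψ ‖x j (t - τ) - x i (t - τ)‖ /
          ∑ ℓ, ψ ‖x ℓ (t - τ) - x i (t - τ)‖) • (v j (t - τ) - v i (t - τ))) t)
    (hconst : ∀ i, ∀ t ∈ Icc (-τ) (0 : ℝ), v i t = v i 0)
    (dx0 dv0 : ℝ)
    (hdx0 : dx0 = sSup (diamAt x '' Icc (-τ) 0))
    (hdv0 : dv0 = sSup (diamAt v '' Icc (-τ) 0))
    (C : ℝ) (hC : C ∈ Ioo (0 : ℝ) 1)
    (hcond : Psi ψ (dx0 + dv0 / C) - C ≥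
      4 * τ * exp (C * τ) * (exp (C * τ) - 1) / (C * τ)) :
    BddAbove (diamAt x '' Ici 0) ∧
    Tendsto (diamAt v) atTop (nhds 0) ∧
    ∀ t, 0 ≤ t → diamAt v t ≤ dv0 * exp (-C * t) := by
  have hs : IsCSDelaySolution τ ψ x v := ⟨hxc, hvc, hx', hv'⟩
  have hdv : dv0 = diamAt v 0 := by
    rw [hdv0, image_congr fun t ht => diamAt_eq_of_forall_eq fun i => hconst i t ht,
      (nonempty_Icc.2 (neg_nonpos.2 hτ.le)).image_const, csSup_singleton]
  have hdx : ∀ s ∈ Icc (-τ) 0, diamAt x s ≤ dx0 := fun s hs => hdx0 ▸ le_csSup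
    (bddAbove_diamAt_image isCompact_Icc fun i => (hxc i).mono Icc_subset_Ici_self) ⟨s, hs, rfl⟩
  have hgain : (1 - Psi ψ (dx0 + diamAt v 0 / C)) * exp (C * τ) + 2 * delayGain C τ ≤ 1 - C := by
    refine one_sub_mul_exp_add_two_mul_delayGain_le hC hτ.le ?_
    have h4 : 4 * τ * exp (C * τ) * (exp (C * τ) - 1) / (C * τ) = 4 * delayGain C τ := by
      rw [delayGain]; field_simp
    rw [← hdv]; linarith
  have hdecay : ∀ t, -τ ≤ t → diamAt v t ≤ dv0 * exp (-C * t) := fun t ht =>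
    hdv ▸ hs.diamAt_le_exp hτ hC.1 hψ hconst hdx hgain ht
  refine ⟨⟨dx0 + dv0 / C, ?_⟩, ?_, fun t ht => hdecay t (by linarith)⟩
  · rintro _ ⟨s, hs0, rfl⟩
    have hx0 : 0 ≤ dx0 := (diamAt_nonneg x 0).trans (hdx 0 ⟨by linarith, le_rfl⟩)
    refine diamAt_le (fun j l => ?_) (add_nonneg hx0 (div_nonneg (hdv ▸ diamAt_nonneg v 0) hC.1.le))
    linarith [hs.norm_sub_x_le hτ.le hC.1 (fun t ht => hdecay t (by linarith [ht.1]))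
      ⟨hs0, le_rfl⟩ j l, (norm_sub_le_diamAt x 0 j l).trans (hdx 0 ⟨by linarith, le_rfl⟩)]
  · have hlim : Tendsto (fun t => dv0 * exp (-C * t)) atTop (nhds 0) := by
      simpa using (tendsto_exp_atBot.comp
        (tendsto_id.const_mul_atTop_of_neg (neg_neg_of_pos hC.1))).const_mul dv0
    refine squeeze_zero' (Eventually.of_forall (diamAt_nonneg v)) ?_ hlim
    filter_upwards [eventually_ge_atTop 0] with t ht using hdecay t (by linarith)

theorem flocking_CS_selfdelay_normalized_weights_constant_initial_velocity
    {N d : ℕ} (hN : 2 ≤ N) (hd : 1 ≤ d) {τ : ℝ} (hτ : 0 < τ)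
    (x v : Fin N → ℝ → EuclideanSpace ℝ (Fin d))
    (hxc : ∀ i, ContinuousOn (x i) (Ici (-τ)))
    (hvc : ∀ i, ContinuousOn (v i) (Ici (-τ)))
    (ψ : ℝ → ℝ) (hψc : Continuous ψ) (hψ : ∀ s, 0 ≤ s → ψ s ∈ Ioc (0 : ℝ) 1)
    (hx' : ∀ i, ∀ t, 0 < t → HasDerivAt (x i) (v i t) t)
    (hv' : ∀ i, ∀ t, 0 < t → HasDerivAt (v i)
      (∑ j, (ψ ‖x j (t - τ) - x i (t - τ)‖ /
          ∑ ℓ, ψ ‖x ℓ (t - τ) - x i (t - τ)‖) • (v j (t - τ) - v i (t - τ))) t)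
    (hconst : ∀ i, ∀ t ∈ Icc (-τ) (0 : ℝ), v i t = v i 0)
    (dx0 dv0 : ℝ)
    (hdx0 : dx0 = sSup (diamAt x '' Icc (-τ) 0))
    (hdv0 : dv0 = sSup (diamAt v '' Icc (-τ) 0))
    (C : ℝ) (hC : C ∈ Ioo (0 : ℝ) 1)
    (hcond : Psi ψ (dx0 + dv0 / C) - C ≥
      4 * τ * exp (C * τ) * (exp (C * τ) - 1) / (C * τ)) :
    BddAbove (diamAt x '' Ici 0) ∧
    Tendsto (diamAt v) atTop (nhds 0) ∧
    ∀ t, 0 ≤ t → diamAt v t ≤ dv0 * exp (-C * t) :=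
  flocking_CS_selfdelay_normalized_weights_constant_initial_velocity_general hτ x v hxc hvc ψ hψ hx'
    hv' hconst dx0 dv0 hdx0 hdv0 C hC hcond
end

section
/- Let τ > 0 and 0 < α < β. Then there exists a unique γ ∈ (0, β − α) such that β − γ = α e^{γτ} (e^{γτ} − 1)/(γτ). Moreover, the function γ ↦ α e^{γτ}(e^{γτ} − 1)/(γτ) + γ is strictly increasing on (0,∞), with limit α + γ → α as γ → 0+. -/
/-!
Both factors of `g x = exp x * ((exp x - 1) / x)` are increasing and exceed `1` on `x > 0` (the
second is a secant slope of the convex function `exp` from `0`), and `g x → exp' 0 = 1` as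
`x → 0`. Hence `F γ = α * g (γ * τ) + γ` is strictly increasing on `γ > 0`, tends to `α` at `0⁺`
and satisfies `F (β - α) > α + (β - α) = β`, so the intermediate value theorem gives exactly one
root of `F γ = β` in `(0, β - α)`.
-/

open Real Set Filter Topology

theorem exists_mem_Ioc_eq_of_tendsto_nhdsGT {α δ : Type*} [ConditionallyCompleteLinearOrder α]
    [TopologicalSpace α] [OrderTopology α] [DenselyOrdered α] [LinearOrder δ]
    [TopologicalSpace δ] [OrderClosedTopology δ] {f : α → δ} {a b : α} {L y : δ}
    (hab : a < b) (hf : ContinuousOn f (Ioc a b)) (hL : Tendsto f (𝓝[>] a) (𝓝 L))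
    (hLy : L < y) (hyb : y ≤ f b) : ∃ c ∈ Ioc a b, f c = y := by
  have : (𝓝[>] a).NeBot := nhdsGT_neBot_of_exists_gt ⟨b, hab⟩
  obtain ⟨a', hfa', ha'b⟩ :=
    ((hL.eventually_lt_const hLy).and (Ioo_mem_nhdsGT hab)).exists
  obtain ⟨c, hc, hfc⟩ := intermediate_value_Icc ha'b.2.le
    (hf.mono (Icc_subset_Ioc_iff ha'b.2.le |>.2 ⟨ha'b.1, le_rfl⟩)) ⟨hfa'.le, hyb⟩
  exact ⟨c, ⟨ha'b.1.trans_le hc.1, hc.2⟩, hfc⟩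

theorem strictMonoOn_exp_sub_one_div : StrictMonoOn (fun x : ℝ => (exp x - 1) / x) (Ioi 0) :=
  fun x hx y hy hxy => by
    simpa using strictConvexOn_exp.secant_strict_mono (mem_univ 0) (mem_univ x) (mem_univ y)
      hx.ne' hy.ne' hxy

theorem one_lt_exp_sub_one_div {x : ℝ} (hx : 0 < x) : 1 < (exp x - 1) / x := by
  rw [one_lt_div hx]
  linarith [add_one_lt_exp hx.ne']

theorem tendsto_exp_sub_one_div_nhdsNE_zero :
    Tendsto (fun x : ℝ => (exp x - 1) / x) (𝓝[≠] 0) (𝓝 1) := by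
  simpa [slope_fun_def_field] using (hasDerivAt_exp 0).tendsto_slope

theorem strictMonoOn_exp_mul_exp_sub_one_div :
    StrictMonoOn (fun x : ℝ => exp x * ((exp x - 1) / x)) (Ioi 0) :=
  fun x hx y hy hxy => calc
    exp x * ((exp x - 1) / x) < exp y * ((exp x - 1) / x) :=
      mul_lt_mul_of_pos_right (exp_lt_exp.2 hxy) (one_pos.trans (one_lt_exp_sub_one_div hx))
    _ ≤ exp y * ((exp y - 1) / y) :=
      mul_le_mul_of_nonneg_left (strictMonoOn_exp_sub_one_div hx hy hxy).le (exp_pos y).le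

theorem one_lt_exp_mul_exp_sub_one_div {x : ℝ} (hx : 0 < x) : 1 < exp x * ((exp x - 1) / x) :=
  one_lt_mul_of_lt_of_le (one_lt_exp_iff.2 hx) (one_lt_exp_sub_one_div hx).le

theorem tendsto_exp_mul_exp_sub_one_div_nhdsNE_zero :
    Tendsto (fun x : ℝ => exp x * ((exp x - 1) / x)) (𝓝[≠] 0) (𝓝 1) := by
  simpa using (continuous_exp.tendsto' 0 1 exp_zero).mono_left nhdsWithin_le_nhds
    |>.mul tendsto_exp_sub_one_div_nhdsNE_zero

noncomputable def halanayRateFun (α τ γ : ℝ) : ℝ :=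
  α * exp (γ * τ) * ((exp (γ * τ) - 1) / (γ * τ)) + γ

section HalanayRateFun

variable {α τ : ℝ}

theorem halanayRateFun_eq (α τ γ : ℝ) :
    halanayRateFun α τ γ = α * (exp (γ * τ) * ((exp (γ * τ) - 1) / (γ * τ))) + γ := by
  rw [halanayRateFun, mul_assoc]

theorem strictMonoOn_halanayRateFun (hα : 0 ≤ α) (hτ : 0 < τ) :
    StrictMonoOn (halanayRateFun α τ) (Ioi 0) := fun x hx y hy hxy => by
  have := strictMonoOn_exp_mul_exp_sub_one_div (mul_pos hx hτ) (mul_pos hy hτ)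
    (mul_lt_mul_of_pos_right hxy hτ)
  rw [halanayRateFun_eq, halanayRateFun_eq]
  linarith [mul_le_mul_of_nonneg_left this.le hα]

theorem lt_halanayRateFun (hα : 0 < α) (hτ : 0 < τ) {γ : ℝ} (hγ : 0 < γ) :
    α + γ < halanayRateFun α τ γ := by
  rw [halanayRateFun_eq]
  nlinarith [one_lt_exp_mul_exp_sub_one_div (mul_pos hγ hτ)]

theorem continuousOn_halanayRateFun (hτ : τ ≠ 0) :
    ContinuousOn (halanayRateFun α τ) (Ioi 0) := by
  unfold halanayRateFun
  refine ContinuousOn.add ?_ continuousOn_id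
  refine ContinuousOn.mul (by fun_prop) (ContinuousOn.div (by fun_prop) (by fun_prop) ?_)
  exact fun γ hγ => mul_ne_zero (ne_of_gt hγ) hτ

theorem tendsto_halanayRateFun_nhdsNE_zero (hτ : τ ≠ 0) :
    Tendsto (halanayRateFun α τ) (𝓝[≠] 0) (𝓝 α) := by
  have hmul : Tendsto (fun γ : ℝ => γ * τ) (𝓝[≠] 0) (𝓝[≠] 0) :=
    tendsto_nhdsWithin_of_tendsto_nhds_of_eventually_within _
      ((continuous_mul_const τ).tendsto' 0 0 (zero_mul τ) |>.mono_left nhdsWithin_le_nhds)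
      (eventually_nhdsWithin_of_forall fun γ hγ => mul_ne_zero hγ hτ)
  have := ((tendsto_exp_mul_exp_sub_one_div_nhdsNE_zero.comp hmul).const_mul α).add
    (tendsto_id.mono_left nhdsWithin_le_nhds : Tendsto id (𝓝[≠] (0 : ℝ)) (𝓝 0))
  simpa [funext (halanayRateFun_eq α τ)] using this

end HalanayRateFun

theorem halanay_rate_exists_unique_and_monotone
    {τ α β : ℝ} (hτ : 0 < τ) (hα : 0 < α) (hαβ : α < β) :
    (∃! γ : ℝ, γ ∈ Ioo 0 (β - α) ∧
      β - γ = α * exp (γ * τ) * ((exp (γ * τ) - 1) / (γ * τ))) ∧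
    StrictMonoOn (fun γ : ℝ => α * exp (γ * τ) * ((exp (γ * τ) - 1) / (γ * τ)) + γ)
      (Ioi 0) ∧
    Tendsto (fun γ : ℝ => α * exp (γ * τ) * ((exp (γ * τ) - 1) / (γ * τ)) + γ)
      (nhdsWithin 0 (Ioi 0)) (nhds α) := by
  have hmono := strictMonoOn_halanayRateFun hα.le hτ
  have hlim := (tendsto_halanayRateFun_nhdsNE_zero (α := α) hτ.ne').mono_left (nhdsGT_le_nhdsNE 0)
  refine ⟨?_, hmono, hlim⟩
  have hroot (γ : ℝ) : β - γ = α * exp (γ * τ) * ((exp (γ * τ) - 1) / (γ * τ)) ↔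
      halanayRateFun α τ γ = β := by
    unfold halanayRateFun
    constructor <;> intro h <;> linarith
  have hβα : 0 < β - α := sub_pos.2 hαβ
  have hend : β < halanayRateFun α τ (β - α) := by
    simpa using lt_halanayRateFun hα hτ hβα
  obtain ⟨c, hc, hFc⟩ := exists_mem_Ioc_eq_of_tendsto_nhdsGT hβα
    ((continuousOn_halanayRateFun hτ.ne').mono Ioc_subset_Ioi_self) hlim hαβ hend.le
  refine ⟨c, ⟨⟨hc.1, hc.2.lt_of_ne ?_⟩, (hroot c).2 hFc⟩, fun γ hγ => ?_⟩
  · rintro rfl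
    exact hend.ne' hFc
  · exact hmono.injOn hγ.1.1 hc.1 (((hroot γ).1 hγ.2).trans hFc.symm)
end
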